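/- In the ERM setting with each φ_i convex and L-smooth (L > 0), ‖a_i‖₂ ≤ R for all i, and with F being μ-strongly convex (μ > 0) and attaining minimum value F*, let λ > 0 and suppose g_{x,λ} and g_{x',λ} attain minimum values g*_{x,λ} and g*_{x',λ}. Then for all y ∈ ℝ^n and x ∈ ℝ^d, setting x' := x − (1/λ)Aᵀy and κ := ⌈L·R²/μ⌉: g_{x',λ}(y) − g*_{x',λ} ≤ 2·(g_{x,λ}(y) − g*_{x,λ}) + 4·n·κ·[(F(x') − F*) + (F(x) − F*)]. -/

import Mathlib

/-!
Let `z` be the proximal point of `F` at `x`, i.e. the minimiser of `F z + λ/2 ‖z - x‖²`, and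
`wᵢ := φᵢ'(⟪aᵢ, z⟫)`, so that `Aᵀw = λ (x - z)`. For every `s`, `g_{s,λ}(y)` plus the proximal
objective at `s` splits as the sum `S` of the Fenchel–Young gaps of `(y, z)` plus
`λ/2 ‖z - s + λ⁻¹ Aᵀy‖²`. At `s = x` the vector `w` is dual optimal, which gives
`g_{x,λ}(y) - g*_{x,λ} ≥ S + λ/2 ‖z - x'‖²`; at `s = x'` weak duality gives
`g_{x',λ}(y) - g*_{x',λ} ≤ S + λ/2 ‖2 (z - x') + (x - z)‖²`. Smoothness makes each gap at least
`(yᵢ - wᵢ)² / 2L`, so `λ² ‖z - x'‖² = ‖Aᵀ(y - w)‖² ≤ 2 L n R² S`; strong convexity bounds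
`μ ‖z - x'‖²` by the suboptimalities of `z` and `x'`, and convexity gives
`F z + λ ‖x - z‖² ≤ F x`. Balancing these bounds by AM–GM gives the claim.
-/

open scoped RealInnerProductSpace NNReal
open Filter Topology

theorem ConvexOn.add_deriv_mul_sub_le {f : ℝ → ℝ} (hf : ConvexOn ℝ Set.univ f)
    (hd : Differentiable ℝ f) (x y : ℝ) : f x + deriv f x * (y - x) ≤ f y := by
  rcases lt_trichotomy x y with h | rfl | h
  · have hslope := hf.deriv_le_slope (Set.mem_univ x) (Set.mem_univ y) h (hd x)
    rw [slope_def_field, le_div_iff₀ (sub_pos.2 h)] at hslope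
    linarith
  · simp
  · have hslope := hf.slope_le_deriv (Set.mem_univ y) (Set.mem_univ x) h (hd x)
    rw [slope_def_field, div_le_iff₀ (sub_pos.2 h)] at hslope
    linarith

theorem hasDerivAt_half_mul_sq_sub {f : ℝ → ℝ} (hd : Differentiable ℝ f) (c t : ℝ) :
    HasDerivAt (fun u ↦ c / 2 * u ^ 2 - f u) (c * t - deriv f t) t := by
  refine (((hasDerivAt_pow 2 t).const_mul (c / 2)).sub (hd t).hasDerivAt).congr_deriv ?_
  ring

theorem convexOn_univ_half_mul_sq_sub {f : ℝ → ℝ} {K : ℝ≥0} (hd : Differentiable ℝ f)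
    (hlip : LipschitzWith K (deriv f)) : ConvexOn ℝ Set.univ (fun t ↦ K / 2 * t ^ 2 - f t) := by
  have hderiv := hasDerivAt_half_mul_sq_sub hd K
  refine Monotone.convexOn_univ_of_deriv (fun t ↦ (hderiv t).differentiableAt) fun s t hst ↦ ?_
  rw [(hderiv s).deriv, (hderiv t).deriv]
  have hdist := hlip.dist_le_mul t s
  rw [Real.dist_eq, Real.dist_eq, abs_of_nonneg (sub_nonneg.2 hst)] at hdist
  linarith [le_abs_self (deriv f t - deriv f s)]

theorem le_add_deriv_mul_sub_add_sq {f : ℝ → ℝ} {K : ℝ≥0} (hd : Differentiable ℝ f)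
    (hlip : LipschitzWith K (deriv f)) (x y : ℝ) :
    f y ≤ f x + deriv f x * (y - x) + K / 2 * (y - x) ^ 2 := by
  have hconv := convexOn_univ_half_mul_sq_sub hd hlip
  have hderiv := hasDerivAt_half_mul_sq_sub hd K
  have htangent := hconv.add_deriv_mul_sub_le (fun t ↦ (hderiv t).differentiableAt) x y
  rw [(hderiv x).deriv] at htangent
  linarith

theorem fenchelYoung_eq_of_isLUB {f : ℝ → ℝ} (hf : ConvexOn ℝ Set.univ f)
    (hd : Differentiable ℝ f) {z c : ℝ}
    (h : IsLUB {u | ∃ t, u = deriv f z * t - f t} c) : c = deriv f z * z - f z := by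
  refine le_antisymm (h.2 ?_) (h.1 ⟨z, rfl⟩)
  rintro u ⟨t, rfl⟩
  linarith [hf.add_deriv_mul_sub_le hd z t]

theorem sq_div_le_fenchelYoung_gap_of_isLUB {f : ℝ → ℝ} {K : ℝ≥0} (hK : 0 < K)
    (hd : Differentiable ℝ f) (hlip : LipschitzWith K (deriv f)) {w c : ℝ}
    (h : IsLUB {u | ∃ t, u = w * t - f t} c) (z : ℝ) :
    (w - deriv f z) ^ 2 / (2 * K) ≤ c + f z - w * z := by
  have hK' : (K : ℝ) ≠ 0 := by positivity
  set δ := (w - deriv f z) / K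
  have hc : w * (z + δ) - f (z + δ) ≤ c := h.1 ⟨z + δ, rfl⟩
  have hdesc := le_add_deriv_mul_sub_add_sq hd hlip z (z + δ)
  have hδ : (w - deriv f z) ^ 2 / (2 * K) = (w - deriv f z) * δ - K / 2 * δ ^ 2 := by
    simp only [δ]; field_simp; ring
  rw [add_sub_cancel_left] at hdesc
  linarith

section StrongConvexity

variable {E : Type*} [NormedAddCommGroup E] [NormedSpace ℝ E] {s : Set E} {m : ℝ}
  {F : E → ℝ} {x₀ : E}

theorem StrongConvexOn.half_mul_sq_norm_sub_le (hF : StrongConvexOn s m F) (hx₀ : x₀ ∈ s)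
    (hmin : IsMinOn F s x₀) {z : E} (hz : z ∈ s) : m / 2 * ‖z - x₀‖ ^ 2 ≤ F z - F x₀ := by
  have hseg : ∀ t ∈ Set.Ioo (0 : ℝ) 1,
      (1 - t) * (m / 2 * ‖z - x₀‖ ^ 2) ≤ F z - F x₀ := by
    rintro t ⟨ht₀, ht₁⟩
    have hconv := hF.2 hx₀ hz (sub_nonneg.2 ht₁.le) ht₀.le (sub_add_cancel 1 t)
    have hmin_seg : F x₀ ≤ F ((1 - t) • x₀ + t • z) :=
      hmin (hF.1 hx₀ hz (sub_nonneg.2 ht₁.le) ht₀.le (sub_add_cancel 1 t))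
    rw [norm_sub_rev] at hconv
    simp only [smul_eq_mul] at hconv
    have hscaled : t * ((1 - t) * (m / 2 * ‖z - x₀‖ ^ 2)) ≤ t * (F z - F x₀) := by linarith
    exact le_of_mul_le_mul_left hscaled ht₀
  have hlim : Tendsto (fun t : ℝ ↦ (1 - t) * (m / 2 * ‖z - x₀‖ ^ 2)) (𝓝[>] 0)
      (𝓝 ((1 - 0) * (m / 2 * ‖z - x₀‖ ^ 2))) :=
    ((continuous_const.sub continuous_id).mul continuous_const).tendsto' 0 _ rfl
      |>.mono_left nhdsWithin_le_nhds
  simpa using le_of_tendsto hlim (eventually_of_mem (Ioo_mem_nhdsGT one_pos) hseg)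

theorem StrongConvexOn.mul_sq_norm_sub_le (hF : StrongConvexOn s m F) (hx₀ : x₀ ∈ s)
    (hmin : IsMinOn F s x₀) {u v : E} (hu : u ∈ s) (hv : v ∈ s) :
    m * ‖u - v‖ ^ 2 ≤ 4 * ((F u - F x₀) + (F v - F x₀)) := by
  have hgu := hF.half_mul_sq_norm_sub_le hx₀ hmin hu
  have hgv := hF.half_mul_sq_norm_sub_le hx₀ hmin hv
  have htri := norm_sub_le_norm_sub_add_norm_sub u x₀ v
  rw [norm_sub_rev x₀ v] at htri
  have hsq : ‖u - v‖ ^ 2 ≤ 2 * (‖u - x₀‖ ^ 2 + ‖v - x₀‖ ^ 2) := by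
    nlinarith [norm_nonneg (u - v), sq_nonneg (‖u - x₀‖ - ‖v - x₀‖)]
  rcases le_or_gt 0 m with hm | hm
  · nlinarith [mul_le_mul_of_nonneg_left hsq hm]
  · have hFu : F x₀ ≤ F u := hmin hu
    have hFv : F x₀ ≤ F v := hmin hv
    nlinarith [mul_nonpos_of_nonpos_of_nonneg hm.le (sq_nonneg ‖u - v‖)]

end StrongConvexity

theorem norm_sum_smul_sq_le {ι E : Type*} [Fintype ι] [SeminormedAddCommGroup E]
    [NormedSpace ℝ E] {a : ι → E} {R : ℝ} (hR : ∀ i, ‖a i‖ ≤ R) (c : ι → ℝ) :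
    ‖∑ i, c i • a i‖ ^ 2 ≤ Fintype.card ι * R ^ 2 * ∑ i, c i ^ 2 := by
  have hnorm : ‖∑ i, c i • a i‖ ≤ ∑ i, |c i| * R :=
    norm_sum_le_of_le _ fun i _ ↦ by
      rw [norm_smul, Real.norm_eq_abs]
      exact mul_le_mul_of_nonneg_left (hR i) (abs_nonneg _)
  calc ‖∑ i, c i • a i‖ ^ 2 ≤ (∑ i, |c i| * R) ^ 2 :=
        pow_le_pow_left₀ (norm_nonneg _) hnorm 2
    _ = R ^ 2 * (∑ i, |c i|) ^ 2 := by rw [← Finset.sum_mul]; ring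
    _ ≤ R ^ 2 * (Fintype.card ι * ∑ i, |c i| ^ 2) :=
      mul_le_mul_of_nonneg_left (sq_sum_le_card_mul_sum_sq ..) (sq_nonneg R)
    _ = Fintype.card ι * R ^ 2 * ∑ i, c i ^ 2 := by simp only [sq_abs]; ring

theorem half_mul_sq_two_mul_add_le {lam μ N S p q dz dxp dx : ℝ} (hlam : 0 < lam)
    (hμ : 0 < μ) (hN : 1 ≤ N) (hp : lam ^ 2 * p ^ 2 ≤ 2 * N * μ * S)
    (hpμ : μ * p ^ 2 ≤ 4 * (dz + dxp)) (hq : dz + lam * q ^ 2 ≤ dx) :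
    lam / 2 * (2 * p + q) ^ 2 ≤ lam * p ^ 2 + S + 4 * N * (dxp + dx) := by
  have hS : 0 ≤ S :=
    nonneg_of_mul_nonneg_right ((by positivity : 0 ≤ lam ^ 2 * p ^ 2).trans hp) (by positivity)
  have hD : 0 ≤ dz + dxp := by nlinarith [sq_nonneg p]
  -- `hprod` gives `(λp²)² ≤ 8 N S (dz + dxp)`, and `(7/5)² · 8 ≤ 16`:
  -- this is what fixes the weight `2/5` in `hcross`.
  have hprod : μ * (lam * p ^ 2) ^ 2 ≤ μ * (8 * N * S * (dz + dxp)) := by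
    nlinarith [mul_le_mul hp hpμ (by positivity) (by positivity)]
  have hsq : (7 / 5 * (lam * p ^ 2)) ^ 2 ≤ (S + 4 * N * (dz + dxp)) ^ 2 := by
    nlinarith [le_of_mul_le_mul_left hprod hμ, sq_nonneg (S - 4 * N * (dz + dxp)),
      mul_nonneg (mul_nonneg (by linarith : (0:ℝ) ≤ N) hS) hD]
  have hamgm : 7 / 5 * (lam * p ^ 2) ≤ S + 4 * N * (dz + dxp) :=
    (pow_le_pow_iff_left₀ (by positivity) (by positivity) two_ne_zero).1 hsq
  have hcross : 2 * p * q ≤ 2 / 5 * p ^ 2 + 5 / 2 * q ^ 2 := by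
    nlinarith [sq_nonneg (2 * p - 5 * q)]
  have hdx : 0 ≤ (4 * N - 3) * (dx - dz) := by
    have hq_nonneg : 0 ≤ lam * q ^ 2 := by positivity
    exact mul_nonneg (by linarith) (by linarith)
  nlinarith [mul_le_mul_of_nonneg_left hcross hlam.le]

theorem mul_natCast_mul_sq_le_natCast_mul_ceil_mul (K R : ℝ) {μ : ℝ} (hμ : 0 < μ) (n : ℕ) :
    K * n * R ^ 2 ≤ n * ⌈K * R ^ 2 / μ⌉₊ * μ := by
  have hceil := (div_le_iff₀ hμ).1 (Nat.le_ceil (K * R ^ 2 / μ))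
  nlinarith [Nat.cast_nonneg (α := ℝ) n]

section ERM

variable {ι E : Type*} [Fintype ι] [NormedAddCommGroup E] [InnerProductSpace ℝ E]
  (a : ι → E) (φ φstar : ι → ℝ → ℝ) (lam : ℝ)

/-- In the paper's notation `ermLoss a φ = F`, `proxObj a φ lam s = F + λ/2 ‖· - s‖²` and
`dualObj a φstar lam s = g_{s,λ}`, with `Aᵀw = ∑ i, w i • a i`. -/
noncomputable def ermLoss (z : E) : ℝ := ∑ i, φ i ⟪a i, z⟫

noncomputable def proxObj (s z : E) : ℝ := ermLoss a φ z + lam / 2 * ‖z - s‖ ^ 2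

noncomputable def dualObj (s : E) (w : ι → ℝ) : ℝ :=
  (∑ i, φstar i (w i)) + 1 / (2 * lam) * ‖∑ i, w i • a i‖ ^ 2 - ⟪s, ∑ i, w i • a i⟫

noncomputable def fenchelYoungGap (w : ι → ℝ) (z : E) : ℝ :=
  ∑ i, (φstar i (w i) + φ i ⟪a i, z⟫ - w i * ⟪a i, z⟫)

variable {a φ φstar lam}

theorem dualObj_add_proxObj (hlam : lam ≠ 0) (s z : E) (w : ι → ℝ) :
    dualObj a φstar lam s w + proxObj a φ lam s z =
      fenchelYoungGap a φ φstar w z + lam / 2 * ‖z - s + lam⁻¹ • ∑ i, w i • a i‖ ^ 2 := by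
  have hinner : ∑ i, w i * ⟪a i, z⟫ = ⟪∑ i, w i • a i, z⟫ := by
    simp only [sum_inner, real_inner_smul_left]
  simp only [dualObj, proxObj, ermLoss, fenchelYoungGap, Finset.sum_sub_distrib,
    Finset.sum_add_distrib, hinner]
  rw [norm_add_sq_real, real_inner_smul_right, norm_smul, Real.norm_eq_abs, mul_pow, sq_abs,
    inner_sub_left, real_inner_comm z]
  field_simp
  ring

theorem fenchelYoungGap_nonneg
    (hφstar : ∀ i w, IsLUB {u | ∃ t, u = w * t - φ i t} (φstar i w)) (w : ι → ℝ) (z : E) :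
    0 ≤ fenchelYoungGap a φ φstar w z :=
  Finset.sum_nonneg fun i _ ↦ by linarith [(hφstar i (w i)).1 ⟨⟪a i, z⟫, rfl⟩]

theorem neg_proxObj_le_dualObj
    (hφstar : ∀ i w, IsLUB {u | ∃ t, u = w * t - φ i t} (φstar i w)) (hlam : 0 < lam)
    (s z : E) (w : ι → ℝ) : -proxObj a φ lam s z ≤ dualObj a φstar lam s w := by
  have hsum := dualObj_add_proxObj (a := a) (φ := φ) (φstar := φstar) hlam.ne' s z w
  have hgap := fenchelYoungGap_nonneg (a := a) hφstar w z
  have hsq : 0 ≤ lam / 2 * ‖z - s + lam⁻¹ • ∑ i, w i • a i‖ ^ 2 := by positivity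
  linarith

theorem fenchelYoungGap_deriv_eq_zero (hconv : ∀ i, ConvexOn ℝ Set.univ (φ i))
    (hdiff : ∀ i, Differentiable ℝ (φ i))
    (hφstar : ∀ i w, IsLUB {u | ∃ t, u = w * t - φ i t} (φstar i w)) (z : E) :
    fenchelYoungGap a φ φstar (fun i ↦ deriv (φ i) ⟪a i, z⟫) z = 0 :=
  Finset.sum_eq_zero fun i _ ↦ by
    rw [fenchelYoung_eq_of_isLUB (hconv i) (hdiff i) (hφstar i _)]
    ring

theorem sum_sq_sub_deriv_le_fenchelYoungGap {K : ℝ≥0} (hK : 0 < K)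
    (hdiff : ∀ i, Differentiable ℝ (φ i)) (hlip : ∀ i, LipschitzWith K (deriv (φ i)))
    (hφstar : ∀ i w, IsLUB {u | ∃ t, u = w * t - φ i t} (φstar i w)) (w : ι → ℝ) (z : E) :
    ∑ i, (w i - deriv (φ i) ⟪a i, z⟫) ^ 2 ≤ 2 * K * fenchelYoungGap a φ φstar w z := by
  rw [fenchelYoungGap, Finset.mul_sum]
  refine Finset.sum_le_sum fun i _ ↦ ?_
  have hgap := sq_div_le_fenchelYoung_gap_of_isLUB hK (hdiff i) (hlip i) (hφstar i (w i))
    ⟪a i, z⟫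
  rw [div_le_iff₀ (by positivity)] at hgap
  linarith

theorem ermLoss_add_inner_le (hconv : ∀ i, ConvexOn ℝ Set.univ (φ i))
    (hdiff : ∀ i, Differentiable ℝ (φ i)) (x z : E) :
    ermLoss a φ z + ⟪∑ i, deriv (φ i) ⟪a i, z⟫ • a i, x - z⟫ ≤ ermLoss a φ x := by
  rw [ermLoss, ermLoss, sum_inner, ← Finset.sum_add_distrib]
  simp_rw [real_inner_smul_left, inner_sub_right]
  exact Finset.sum_le_sum fun i _ ↦ (hconv i).add_deriv_mul_sub_le (hdiff i) _ _

theorem exists_forall_proxObj_le [ProperSpace E] (hcont : ∀ i, Continuous (φ i))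
    (hbdd : BddBelow (Set.range (ermLoss a φ))) (hlam : 0 < lam) (s : E) :
    ∃ z, ∀ z', proxObj a φ lam s z ≤ proxObj a φ lam s z' := by
  obtain ⟨m, hm⟩ := hbdd
  have hnorm : Tendsto (fun z ↦ ‖z - s‖) (cocompact E) atTop :=
    tendsto_norm_cocompact_atTop.comp (Homeomorph.subRight s).isClosedEmbedding.tendsto_cocompact
  refine Continuous.exists_forall_le (by unfold proxObj ermLoss; fun_prop) <|
    tendsto_atTop_mono (fun z ↦ ?_) <| tendsto_atTop_add_const_left _ m <|
      ((tendsto_pow_atTop two_ne_zero).comp hnorm).const_mul_atTop (half_pos hlam)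
  show m + lam / 2 * ‖z - s‖ ^ 2 ≤ ermLoss a φ z + lam / 2 * ‖z - s‖ ^ 2
  linarith [hm ⟨z, rfl⟩]

theorem sum_deriv_smul_eq_of_forall_proxObj_le (hdiff : ∀ i, Differentiable ℝ (φ i)) {s z : E}
    (hz : ∀ z', proxObj a φ lam s z ≤ proxObj a φ lam s z') :
    ∑ i, deriv (φ i) ⟪a i, z⟫ • a i = lam • (s - z) := by
  have hderiv : HasFDerivAt (proxObj a φ lam s) _ z :=
    (HasFDerivAt.fun_sum fun i _ ↦ (hdiff i _).hasDerivAt.comp_hasFDerivAt z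
      (innerSL ℝ (a i)).hasFDerivAt).add (((hasFDerivAt_id z).sub_const s).norm_sq.const_mul _)
  set D := ∑ i, deriv (φ i) ⟪a i, z⟫ • a i + lam • (z - s) with hD
  have hzero := congrArg (· D)
    (((isMinOn_univ_iff.2 hz).isLocalMin Filter.univ_mem).hasFDerivAt_eq_zero hderiv)
  simp only [add_apply, sum_apply, smul_apply, sub_apply, ContinuousLinearMap.comp_id,
    coe_innerSL_apply, map_sub, id_eq, smul_eq_mul, nsmul_eq_mul, Nat.cast_ofNat,
    zero_apply] at hzero
  have hDD : ⟪D, D⟫ = 0 := by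
    rw [← hzero]
    nth_rewrite 1 [hD]
    simp only [inner_add_left, inner_sub_left, sum_inner, real_inner_smul_left]
    ring
  rw [inner_self_eq_zero, add_eq_zero_iff_eq_neg, ← smul_neg, neg_sub] at hDD
  exact hDD

theorem dualObj_sub_le (hφstar : ∀ i w, IsLUB {u | ∃ t, u = w * t - φ i t} (φstar i w))
    (hlam : 0 < lam) (s z : E) (y w : ι → ℝ) :
    dualObj a φstar lam s y - dualObj a φstar lam s w ≤
      fenchelYoungGap a φ φstar y z + lam / 2 * ‖z - s + lam⁻¹ • ∑ i, y i • a i‖ ^ 2 := by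
  linarith [dualObj_add_proxObj (a := a) (φ := φ) (φstar := φstar) hlam.ne' s z y,
    neg_proxObj_le_dualObj (a := a) hφstar hlam s z w]

theorem dualObj_sub_dualObj_deriv_eq (hconv : ∀ i, ConvexOn ℝ Set.univ (φ i))
    (hdiff : ∀ i, Differentiable ℝ (φ i))
    (hφstar : ∀ i w, IsLUB {u | ∃ t, u = w * t - φ i t} (φstar i w)) (hlam : lam ≠ 0) {s z : E}
    (hz : ∑ i, deriv (φ i) ⟪a i, z⟫ • a i = lam • (s - z)) (y : ι → ℝ) :
    dualObj a φstar lam s y - dualObj a φstar lam s (fun i ↦ deriv (φ i) ⟪a i, z⟫) =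
      fenchelYoungGap a φ φstar y z + lam / 2 * ‖z - s + lam⁻¹ • ∑ i, y i • a i‖ ^ 2 := by
  have hsum := dualObj_add_proxObj (a := a) (φ := φ) (φstar := φstar) hlam s z y
  have hopt := dualObj_add_proxObj (a := a) (φ := φ) (φstar := φstar) hlam s z
    fun i ↦ deriv (φ i) ⟪a i, z⟫
  rw [fenchelYoungGap_deriv_eq_zero hconv hdiff hφstar, hz, smul_smul, inv_mul_cancel₀ hlam,
    one_smul, sub_add_sub_cancel, sub_self, norm_zero] at hopt
  linarith

theorem dualObj_recenter_sub_le {K : ℝ≥0} (hK : 0 < K) (hconv : ∀ i, ConvexOn ℝ Set.univ (φ i))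
    (hdiff : ∀ i, Differentiable ℝ (φ i)) (hlip : ∀ i, LipschitzWith K (deriv (φ i)))
    (hφstar : ∀ i w, IsLUB {u | ∃ t, u = w * t - φ i t} (φstar i w))
    {R : ℝ} (hR : ∀ i, ‖a i‖ ≤ R) {μ : ℝ} (hμ : 0 < μ)
    (hsc : StrongConvexOn Set.univ μ (ermLoss a φ)) {x₀ : E}
    (hx₀ : IsMinOn (ermLoss a φ) Set.univ x₀) (hlam : 0 < lam) {N : ℝ} (hN : 1 ≤ N)
    (hKN : K * Fintype.card ι * R ^ 2 ≤ N * μ) {x z : E}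
    (hz : ∑ i, deriv (φ i) ⟪a i, z⟫ • a i = lam • (x - z)) (y w : ι → ℝ) {x' : E}
    (hx' : x' = x - lam⁻¹ • ∑ i, y i • a i) :
    dualObj a φstar lam x' y - dualObj a φstar lam x' w ≤
      2 * (dualObj a φstar lam x y - dualObj a φstar lam x fun i ↦ deriv (φ i) ⟪a i, z⟫) +
        4 * N * ((ermLoss a φ x' - ermLoss a φ x₀) + (ermLoss a φ x - ermLoss a φ x₀)) := by
  set ws : ι → ℝ := fun i ↦ deriv (φ i) ⟪a i, z⟫
  set S := fenchelYoungGap a φ φstar y z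
  have hupper := dualObj_sub_le (a := a) (φ := φ) hφstar hlam x' z y w
  have hshift' : z - x' + lam⁻¹ • ∑ i, y i • a i = (2 : ℝ) • (z - x') + (x - z) := by
    rw [hx']; module
  have hnorm : ‖(2 : ℝ) • (z - x') + (x - z)‖ ≤ 2 * ‖z - x'‖ + ‖x - z‖ :=
    (norm_add_le _ _).trans_eq (by rw [norm_smul, Real.norm_two])
  have hlower := dualObj_sub_dualObj_deriv_eq hconv hdiff hφstar hlam.ne' hz y
  have hshift : z - x + lam⁻¹ • ∑ i, y i • a i = z - x' := by rw [hx']; module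
  rw [hshift'] at hupper
  rw [hshift] at hlower
  have hS : lam ^ 2 * ‖z - x'‖ ^ 2 ≤ 2 * N * μ * S := by
    have hsmul : lam • (z - x') = ∑ i, (y i - ws i) • a i := by
      simp only [sub_smul, Finset.sum_sub_distrib]
      rw [hz, hx', smul_sub, smul_sub, smul_smul, mul_inv_cancel₀ hlam.ne', one_smul]
      module
    calc lam ^ 2 * ‖z - x'‖ ^ 2 = ‖∑ i, (y i - ws i) • a i‖ ^ 2 := by
          rw [← hsmul, norm_smul, Real.norm_of_nonneg hlam.le, mul_pow]
      _ ≤ Fintype.card ι * R ^ 2 * ∑ i, (y i - ws i) ^ 2 := norm_sum_smul_sq_le hR _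
      _ ≤ Fintype.card ι * R ^ 2 * (2 * K * S) := by
          gcongr
          exact sum_sq_sub_deriv_le_fenchelYoungGap hK hdiff hlip hφstar y z
      _ ≤ 2 * N * μ * S := by nlinarith [fenchelYoungGap_nonneg (a := a) hφstar y z]
  have hgrowth := hsc.mul_sq_norm_sub_le (Set.mem_univ _) hx₀ (Set.mem_univ z) (Set.mem_univ x')
  have hdesc : ermLoss a φ z + lam * ‖x - z‖ ^ 2 ≤ ermLoss a φ x := by
    have htangent := ermLoss_add_inner_le (a := a) hconv hdiff x z
    rwa [hz, real_inner_smul_left, real_inner_self_eq_norm_sq] at htangent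
  have hbalance := half_mul_sq_two_mul_add_le hlam hμ hN hS hgrowth
    (q := ‖x - z‖) (dx := ermLoss a φ x - ermLoss a φ x₀) (by linarith)
  nlinarith [pow_le_pow_left₀ (norm_nonneg _) hnorm 2]

end ERM

/-- Lemma: dual error after re-centering. -/
theorem stmt15 {n d : ℕ} (a : Fin n → EuclideanSpace ℝ (Fin d))
    (φ : Fin n → ℝ → ℝ) (hconv : ∀ i, ConvexOn ℝ Set.univ (φ i))
    (L : ℝ) (hL : 0 < L)
    (hdiff : ∀ i, Differentiable ℝ (φ i))
    (hlip : ∀ i, LipschitzWith L.toNNReal (deriv (φ i)))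
    (R : ℝ) (hR : ∀ i, ‖a i‖ ≤ R)
    (μ : ℝ) (hμ : 0 < μ)
    (hsc : ConvexOn ℝ Set.univ
      (fun z : EuclideanSpace ℝ (Fin d) => (∑ i, φ i ⟪a i, z⟫) - μ / 2 * ‖z‖ ^ 2))
    (Fstar : ℝ)
    (hF : IsLeast
      (Set.range (fun z : EuclideanSpace ℝ (Fin d) => ∑ i, φ i ⟪a i, z⟫)) Fstar)
    (φstar : Fin n → ℝ → ℝ)
    (hφstar : ∀ i (w : ℝ), IsLUB {u : ℝ | ∃ z : ℝ, u = w * z - φ i z} (φstar i w))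
    (lam : ℝ) (hlam : 0 < lam)
    (y : EuclideanSpace ℝ (Fin n)) (x : EuclideanSpace ℝ (Fin d))
    (x' : EuclideanSpace ℝ (Fin d)) (hx' : x' = x - lam⁻¹ • ∑ i, y i • a i)
    (gstarx gstarx' : ℝ)
    (hgx : IsLeast
      (Set.range (fun w : EuclideanSpace ℝ (Fin n) =>
        (∑ i, φstar i (w i)) + 1 / (2 * lam) * ‖∑ i, w i • a i‖ ^ 2
          - ⟪x, ∑ i, w i • a i⟫)) gstarx)
    (hgx' : IsLeast
      (Set.range (fun w : EuclideanSpace ℝ (Fin n) =>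
        (∑ i, φstar i (w i)) + 1 / (2 * lam) * ‖∑ i, w i • a i‖ ^ 2
          - ⟪x', ∑ i, w i • a i⟫)) gstarx') :
    ((∑ i, φstar i (y i)) + 1 / (2 * lam) * ‖∑ i, y i • a i‖ ^ 2
        - ⟪x', ∑ i, y i • a i⟫) - gstarx' ≤
      2 * (((∑ i, φstar i (y i)) + 1 / (2 * lam) * ‖∑ i, y i • a i‖ ^ 2
          - ⟪x, ∑ i, y i • a i⟫) - gstarx)
        + 4 * (n : ℝ) * (⌈L * R ^ 2 / μ⌉₊ : ℝ) *
            (((∑ i, φ i ⟪a i, x'⟫) - Fstar) + ((∑ i, φ i ⟪a i, x⟫) - Fstar)) := by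
  obtain ⟨x₀, rfl⟩ := hF.1
  have hx₀ : IsMinOn (ermLoss a φ) Set.univ x₀ := fun z _ ↦ hF.2 ⟨z, rfl⟩
  obtain ⟨w', rfl⟩ := hgx'.1
  show dualObj a φstar lam x' y - dualObj a φstar lam x' w' ≤
    2 * (dualObj a φstar lam x y - gstarx) + 4 * (n : ℝ) * (⌈L * R ^ 2 / μ⌉₊ : ℝ) *
      ((ermLoss a φ x' - ermLoss a φ x₀) + (ermLoss a φ x - ermLoss a φ x₀))
  by_cases ha : ∀ i, a i = 0
  · obtain rfl : x' = x := by simp [hx', ha]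
    have hy : gstarx ≤ dualObj a φstar lam x' y := hgx.2 ⟨y, rfl⟩
    have hloss : 0 ≤ ermLoss a φ x' - ermLoss a φ x₀ := sub_nonneg.2 (hx₀ (Set.mem_univ x'))
    have hmin : gstarx = dualObj a φstar lam x' w' := hgx.unique hgx'
    nlinarith [mul_nonneg (by positivity : (0 : ℝ) ≤ 4 * n * ⌈L * R ^ 2 / μ⌉₊) hloss]
  obtain ⟨i, hi⟩ := not_forall.1 ha
  have hN : (1 : ℝ) ≤ n * ⌈L * R ^ 2 / μ⌉₊ := by
    have hR_pos : 0 < R := (norm_pos_iff.2 hi).trans_le (hR i)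
    exact one_le_mul_of_one_le_of_one_le (by exact_mod_cast i.pos)
      (by exact_mod_cast Nat.one_le_ceil_iff.2 (by positivity))
  have hLN : (L.toNNReal : ℝ) * Fintype.card (Fin n) * R ^ 2 ≤ n * ⌈L * R ^ 2 / μ⌉₊ * μ := by
    rw [Real.coe_toNNReal L hL.le, Fintype.card_fin]
    exact mul_natCast_mul_sq_le_natCast_mul_ceil_mul L R hμ n
  obtain ⟨z, hz⟩ := exists_forall_proxObj_le (fun i ↦ (hdiff i).continuous) ⟨_, hF.2⟩ hlam x
  have hkey := dualObj_recenter_sub_le (Real.toNNReal_pos.2 hL) hconv hdiff hlip hφstar hR hμ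
    (strongConvexOn_iff_convex.2 hsc) hx₀ hlam hN hLN
    (sum_deriv_smul_eq_of_forall_proxObj_le hdiff hz) y w' hx'
  have hdual : gstarx ≤ dualObj a φstar lam x fun i ↦ deriv (φ i) ⟪a i, z⟫ :=
    hgx.2 ⟨WithLp.toLp 2 _, rfl⟩
  linarith
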